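/- Let f(s) = s·ln(1+s) and F(s) = ∫₀^s t·ln(1+t) dt for s ≥ 0, and set F̃(s) = (1/2)f(s)·s − F(s). Then F̃(s) > 0 for all s > 0, and for every σ > 3/2 there exist constants C̃ > 0 and r₀ > 0 such that f(s)^σ ≤ C̃ s^σ F̃(s) for all s ≥ r₀. -/

import Mathlib

/-!
An antiderivative of `t * log (1 + t)` is `(t ^ 2 - 1) / 2 * log (1 + t) - t ^ 2 / 4 + t / 2`, so
`F̃ s = (log (1 + s) - (s - s ^ 2 / 2)) / 2`, which is positive by the second-order Taylor bound
for `log (1 + s)`. For the growth condition, `log x ≤ σ x ^ (1 / σ)` gives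
`log (1 + s) ^ σ ≤ σ ^ σ (1 + s) ≤ 2 σ ^ σ s`, while `F̃ s ≥ s` once `s ≥ 6`.
-/

open Real Set

lemma hasDerivAt_log_one_add {t : ℝ} (ht : -1 < t) :
    HasDerivAt (fun t => log (1 + t)) (1 + t)⁻¹ t := by
  simpa using ((hasDerivAt_id t).const_add 1).log (by linarith : 0 < 1 + t).ne'

lemma hasDerivAt_antideriv_mul_log_one_add {t : ℝ} (ht : -1 < t) :
    HasDerivAt (fun t => (t ^ 2 - 1) / 2 * log (1 + t) - t ^ 2 / 4 + t / 2)
      (t * log (1 + t)) t := by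
  have hsq : HasDerivAt (fun t : ℝ => t ^ 2) (2 * t) t := by
    simpa using hasDerivAt_pow 2 t
  have := ((((hsq.sub_const 1).div_const 2).mul (hasDerivAt_log_one_add ht)).sub
    (hsq.div_const 4)).add ((hasDerivAt_id t).div_const 2)
  refine this.congr_deriv ?_
  have : 1 + t ≠ 0 := by linarith
  field_simp
  ring

lemma integral_mul_log_one_add {s : ℝ} (hs : -1 < s) :
    ∫ t in (0 : ℝ)..s, t * log (1 + t) = (s ^ 2 - 1) / 2 * log (1 + s) - s ^ 2 / 4 + s / 2 := by
  have hpos : ∀ t ∈ uIcc 0 s, -1 < t := fun t ht => by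
    rcases mem_uIcc.mp ht with h | h <;> linarith [h.1]
  have hcont : ContinuousOn (fun t : ℝ => t * log (1 + t)) (uIcc 0 s) :=
    continuousOn_id.mul <| ContinuousOn.log (by fun_prop) fun t ht =>
      ne_of_gt (by linarith [hpos t ht])
  rw [intervalIntegral.integral_eq_sub_of_hasDerivAt
    (fun t ht => hasDerivAt_antideriv_mul_log_one_add (hpos t ht)) hcont.intervalIntegrable]
  simp

lemma sub_sq_div_two_lt_log_one_add {s : ℝ} (hs : 0 < s) : s - s ^ 2 / 2 < log (1 + s) := by
  have hmono : StrictMonoOn (fun u => log (1 + u) - u + u ^ 2 / 2) (Ici 0) := by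
    refine strictMonoOn_of_deriv_pos (convex_Ici 0) ?_ fun x hx => ?_
    · refine ((ContinuousOn.log (by fun_prop) fun t ht => ?_).sub continuousOn_id).add (by fun_prop)
      exact ne_of_gt (by linarith [mem_Ici.mp ht])
    · rw [interior_Ici] at hx
      have hx : 0 < x := hx
      have hderiv : HasDerivAt (fun u => log (1 + u) - u + u ^ 2 / 2) ((1 + x)⁻¹ - 1 + x) x :=
        (((hasDerivAt_log_one_add (by linarith)).sub (hasDerivAt_id x)).add
          ((hasDerivAt_pow 2 x).div_const 2)).congr_deriv (by norm_num)
      rw [hderiv.deriv, show (1 + x)⁻¹ - 1 + x = x ^ 2 / (1 + x) by field_simp; ring]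
      positivity
  have hlt := hmono self_mem_Ici hs.le hs
  norm_num at hlt
  linarith

lemma rpow_log_le_rpow_mul_self {x σ : ℝ} (hx : 1 ≤ x) (hσ : 0 < σ) :
    log x ^ σ ≤ σ ^ σ * x := by
  have hlog : log x ≤ σ * x ^ σ⁻¹ := by
    simpa [div_eq_mul_inv, mul_comm] using log_le_rpow_div (by linarith) (inv_pos.mpr hσ)
  calc log x ^ σ ≤ (σ * x ^ σ⁻¹) ^ σ := rpow_le_rpow (log_nonneg hx) hlog hσ.le
    _ = σ ^ σ * x := by
      rw [mul_rpow hσ.le (by positivity), ← rpow_mul (by linarith), inv_mul_cancel₀ hσ.ne',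
        rpow_one]

theorem log_nonlinearity_satisfies_f4
    (f F Ftil : ℝ → ℝ)
    (hf : ∀ s, f s = s * Real.log (1 + s))
    (hF : ∀ s, F s = ∫ t in (0:ℝ)..s, t * Real.log (1 + t))
    (hFtil : ∀ s, Ftil s = (1 / 2) * f s * s - F s) :
    (∀ s > (0:ℝ), 0 < Ftil s) ∧
      ∀ σ > (3 / 2 : ℝ), ∃ C > (0:ℝ), ∃ r₀ > (0:ℝ),
        ∀ s ≥ r₀, (f s) ^ σ ≤ C * s ^ σ * Ftil s := by
  have hFtil_eq : ∀ s, -1 < s → Ftil s = (log (1 + s) - (s - s ^ 2 / 2)) / 2 := fun s hs => by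
    rw [hFtil, hf, hF, integral_mul_log_one_add hs]
    ring
  refine ⟨fun s hs => ?_, fun σ hσ => ⟨2 * σ ^ σ, by positivity, 6, by norm_num, fun s hs => ?_⟩⟩
  · rw [hFtil_eq s (by linarith)]
    linarith [sub_sq_div_two_lt_log_one_add hs]
  · have hlog : 0 ≤ log (1 + s) := log_nonneg (by linarith)
    have hs_le : s ≤ Ftil s := by
      rw [hFtil_eq s (by linarith)]
      nlinarith
    calc f s ^ σ = s ^ σ * log (1 + s) ^ σ := by rw [hf, mul_rpow (by linarith) hlog]
      _ ≤ s ^ σ * (σ ^ σ * (1 + s)) := by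
        gcongr
        exact rpow_log_le_rpow_mul_self (by linarith) (by linarith)
      _ ≤ s ^ σ * (σ ^ σ * (2 * Ftil s)) := by gcongr; linarith
      _ = 2 * σ ^ σ * s ^ σ * Ftil s := by ring
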